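/- arXiv:1003.6104 — 3 statements merged into one kernel-verified Lean document; each statement's English description precedes it below -/
import Mathlib

section
/- Let q ≥ 2. Define sequences a_1(n), ..., a_q(n) by a_1(0) = ... = a_{q-1}(0) = 0, a_q(0) = 1, and for n ≥ 0: a_ℓ(n+1) = a_{ℓ+1}(n) for 1 ≤ ℓ < q, and a_q(n+1) = 2·a_1(n) + a_2(n) + ... + a_q(n). Then for all k ≥ 0 and 0 ≤ r < q, writing j = kq + r, we have a_1(j) = (2^j - 2^r)/(2^q - 1) if r < q - 1, and a_1(j) = 1 + (2^j - 2^{q-1})/(2^q - 1) if r = q - 1. -/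
/-!
The sequence `n ↦ a 1 n` satisfies the order-`q` linear recurrence
`u (n + q) = 2 u n + u (n + 1) + ⋯ + u (n + q - 1)`, so it is determined by its first `q` values
`0, …, 0, 1`. The closed form is `2 ^ n / (2 ^ q - 1)` plus a `q`-periodic correction. The first
term solves the recurrence because `2 ^ q = 1 + ∑ i < q, 2 ^ i`, and a `q`-periodic sequence solves
it exactly when its sum over one period vanishes, which is the case for
`[n % q = q - 1] - 2 ^ (n % q) / (2 ^ q - 1)`.
-/

open Finset

theorem Function.Periodic.sum_range_add {M : Type*} [AddCommMonoid M] {f : ℕ → M} {c : ℕ}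
    (hf : Function.Periodic f c) (n : ℕ) :
    ∑ i ∈ range c, f (n + i) = ∑ i ∈ range c, f i := by
  calc ∑ i ∈ range c, f (n + i) = ∑ i ∈ Ico n (n + c), f i := by
        rw [sum_Ico_eq_sum_range, Nat.add_sub_cancel_left]
    _ = ((Multiset.Ico n (n + c)).map (f <| · % c)).sum := by
        simp only [hf.map_mod_nat]; rfl
    _ = ∑ i ∈ range c, f i := by
        rw [Finset.sum, range_val, ← Nat.multiset_Ico_map_mod n c, Multiset.map_map]; rfl

namespace LinearRecurrence

variable {R : Type*} [CommSemiring R] {q : ℕ}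

variable (R) in
def twoOnes (q : ℕ) : LinearRecurrence R := ⟨q, fun i => if (i : ℕ) = 0 then 2 else 1⟩

theorem isSolution_twoOnes_iff (hq : 0 < q) {u : ℕ → R} :
    (twoOnes R q).IsSolution u ↔ ∀ n, u (n + q) = u n + ∑ i ∈ range q, u (n + i) := by
  have hrhs : ∀ n, ∑ i : Fin q, (if (i : ℕ) = 0 then (2 : R) else 1) * u (n + i)
      = u n + ∑ i ∈ range q, u (n + i) := by
    intro n
    have hcoeff : ∀ i : ℕ, (if i = 0 then (2 : R) else 1) * u (n + i)
        = u (n + i) + if i = 0 then u n else 0 := by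
      intro i
      split_ifs with hi <;> simp [hi, two_mul]
    rw [Fin.sum_univ_eq_sum_range (fun i => (if i = 0 then (2 : R) else 1) * u (n + i)),
      sum_congr rfl fun i _ => hcoeff i, sum_add_distrib, sum_ite_eq' _ _ _,
      if_pos (mem_range.mpr hq), add_comm]
  exact forall_congr' fun n => by rw [← hrhs]; rfl

theorem isSolution_twoOnes_two_pow (hq : 0 < q) :
    (twoOnes R q).IsSolution fun n => (2 : R) ^ n := by
  rw [isSolution_twoOnes_iff hq]
  intro n
  have hgeom := geom_sum_mul_add (1 : R) q
  simp only [mul_one, one_add_one_eq_two] at hgeom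
  simp only [pow_add, ← mul_sum, ← hgeom]
  ring

theorem isSolution_twoOnes_of_periodic (hq : 0 < q) {u : ℕ → R} (hu : Function.Periodic u q)
    (hsum : ∑ i ∈ range q, u i = 0) : (twoOnes R q).IsSolution u := by
  rw [isSolution_twoOnes_iff hq]
  intro n
  rw [hu n, hu.sum_range_add, hsum, add_zero]

end LinearRecurrence

def firstCoordinateClosedForm (q n : ℕ) : ℚ :=
  ((2 : ℚ) ^ n - 2 ^ (n % q)) / (2 ^ q - 1) + if n % q = q - 1 then 1 else 0

theorem isSolution_firstCoordinateClosedForm {q : ℕ} (hq : 0 < q) :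
    (LinearRecurrence.twoOnes ℚ q).IsSolution (firstCoordinateClosedForm q) := by
  have hden : (2 : ℚ) ^ q - 1 ≠ 0 := by
    have : (1 : ℚ) < 2 ^ q := one_lt_pow₀ one_lt_two hq.ne'
    linarith
  set periodicPart : ℕ → ℚ := fun n => (if n % q = q - 1 then 1 else 0) - 2 ^ (n % q) / (2 ^ q - 1)
  have hperiodic : Function.Periodic periodicPart q := fun n => by
    simp only [periodicPart, Nat.add_mod_right]
  have hsum : ∑ i ∈ range q, periodicPart i = 0 := by
    have hresidue : ∀ i ∈ range q,
        periodicPart i = (if i = q - 1 then 1 else 0) - 2 ^ i / (2 ^ q - 1) := fun i hi => by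
      simp only [periodicPart, Nat.mod_eq_of_lt (mem_range.mp hi)]
    rw [sum_congr rfl hresidue, sum_sub_distrib, sum_ite_eq', if_pos (mem_range.mpr (by omega)),
      ← sum_div, geom_sum_eq one_lt_two.ne']
    norm_num [hden]
  have hgeom := (LinearRecurrence.twoOnes ℚ q).solSpace.smul_mem ((2 ^ q - 1)⁻¹)
    (LinearRecurrence.isSolution_twoOnes_two_pow (R := ℚ) hq)
  rw [LinearRecurrence.is_sol_iff_mem_solSpace]
  convert (LinearRecurrence.twoOnes ℚ q).solSpace.add_mem hgeom
    (LinearRecurrence.isSolution_twoOnes_of_periodic hq hperiodic hsum) using 1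
  funext n
  simp only [firstCoordinateClosedForm, periodicPart, Pi.add_apply, Pi.smul_apply, smul_eq_mul]
  ring

section FirstCoordinate

variable {q : ℕ} {a : ℕ → ℕ → ℕ}
  (hstep : ∀ ℓ n, 1 ≤ ℓ → ℓ < q → a ℓ (n + 1) = a (ℓ + 1) n)
include hstep

theorem coordinate_succ_eq_first_coordinate {i : ℕ} (hi : i < q) (m : ℕ) :
    a (i + 1) m = a 1 (m + i) := by
  induction i generalizing m with
  | zero => rfl
  | succ i ih =>
    rw [← hstep (i + 1) m le_add_self (by omega), ih (by omega), add_right_comm, add_assoc]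

theorem isSolution_first_coordinate (hq : 0 < q)
    (hqstep : ∀ n, a q (n + 1) = 2 * a 1 n + ∑ ℓ ∈ Icc 2 q, a ℓ n) :
    (LinearRecurrence.twoOnes ℚ q).IsSolution fun n => (a 1 n : ℚ) := by
  rw [LinearRecurrence.isSolution_twoOnes_iff hq]
  intro n
  obtain ⟨p, rfl⟩ : ∃ p, q = p + 1 := ⟨q - 1, by omega⟩
  have htop : a 1 (n + (p + 1)) = a (p + 1) (n + 1) := by
    rw [coordinate_succ_eq_first_coordinate hstep (Nat.lt_succ_self p), add_right_comm, add_assoc]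
  have hrest : ∑ ℓ ∈ Icc 2 (p + 1), a ℓ n = ∑ i ∈ range p, a 1 (n + (i + 1)) := by
    rw [← Ico_add_one_right_eq_Icc, sum_Ico_eq_sum_range]
    refine sum_congr (by congr 1) fun i hi => ?_
    rw [show 2 + i = (i + 1) + 1 by omega,
      coordinate_succ_eq_first_coordinate hstep (by simp at hi; omega)]
  rw [sum_range_succ', add_zero, htop, hqstep, hrest]
  push_cast
  ring

end FirstCoordinate

theorem first_coordinate_eq_closedForm {q : ℕ} (hq : 0 < q) {a : ℕ → ℕ → ℕ}
    (h0 : ∀ ℓ, 1 ≤ ℓ → ℓ < q → a ℓ 0 = 0) (hq0 : a q 0 = 1)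
    (hstep : ∀ ℓ n, 1 ≤ ℓ → ℓ < q → a ℓ (n + 1) = a (ℓ + 1) n)
    (hqstep : ∀ n, a q (n + 1) = 2 * a 1 n + ∑ ℓ ∈ Icc 2 q, a ℓ n) (n : ℕ) :
    (a 1 n : ℚ) = firstCoordinateClosedForm q n := by
  have hinit : ∀ i < q, (a 1 i : ℚ) = firstCoordinateClosedForm q i := by
    intro i hi
    rw [firstCoordinateClosedForm, Nat.mod_eq_of_lt hi, sub_self, zero_div, zero_add,
      ← zero_add i, ← coordinate_succ_eq_first_coordinate hstep hi, zero_add]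
    split_ifs with htop
    · rw [htop, Nat.sub_add_cancel hq, hq0, Nat.cast_one]
    · rw [h0 (i + 1) le_add_self (by omega), Nat.cast_zero]
  refine congrFun ((LinearRecurrence.eq_iff_eqOn_range_order _ _ _
    (isSolution_first_coordinate hstep hq hqstep) (isSolution_firstCoordinateClosedForm hq)).mpr
    fun i hi => hinit i (mem_range.mp hi)) n

theorem matrix_recursion_first_coordinate_general
    (q : ℕ) (a : ℕ → ℕ → ℕ)
    (h0 : ∀ ℓ, 1 ≤ ℓ → ℓ < q → a ℓ 0 = 0)
    (hq0 : a q 0 = 1)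
    (hstep : ∀ ℓ n, 1 ≤ ℓ → ℓ < q → a ℓ (n + 1) = a (ℓ + 1) n)
    (hqstep : ∀ n, a q (n + 1) = 2 * a 1 n + ∑ ℓ ∈ Finset.Icc 2 q, a ℓ n) :
    ∀ k r : ℕ, r < q →
      (if r < q - 1 then
        ((a 1 (k * q + r) : ℚ) = ((2 : ℚ) ^ (k * q + r) - 2 ^ r) / (2 ^ q - 1))
      else
        ((a 1 (k * q + r) : ℚ) = 1 + ((2 : ℚ) ^ (k * q + r) - 2 ^ (q - 1)) / (2 ^ q - 1))) := by
  intro k r hr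
  have hmod : (k * q + r) % q = r := by rw [Nat.mul_add_mod_self_right, Nat.mod_eq_of_lt hr]
  rw [first_coordinate_eq_closedForm (Nat.zero_lt_of_lt hr) h0 hq0 hstep hqstep,
    firstCoordinateClosedForm, hmod]
  rcases (Nat.le_sub_one_of_lt hr).lt_or_eq with hlt | rfl
  · rw [if_pos hlt, if_neg hlt.ne, add_zero]
  · rw [if_neg (lt_irrefl _), if_pos rfl, add_comm]

theorem matrix_recursion_first_coordinate
    (q : ℕ) (hq : 2 ≤ q) (a : ℕ → ℕ → ℕ)
    (h0 : ∀ ℓ, 1 ≤ ℓ → ℓ < q → a ℓ 0 = 0)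
    (hq0 : a q 0 = 1)
    (hstep : ∀ ℓ n, 1 ≤ ℓ → ℓ < q → a ℓ (n + 1) = a (ℓ + 1) n)
    (hqstep : ∀ n, a q (n + 1) = 2 * a 1 n + ∑ ℓ ∈ Finset.Icc 2 q, a ℓ n) :
    ∀ k r : ℕ, r < q →
      (if r < q - 1 then
        ((a 1 (k * q + r) : ℚ) = ((2 : ℚ) ^ (k * q + r) - 2 ^ r) / (2 ^ q - 1))
      else
        ((a 1 (k * q + r) : ℚ) = 1 + ((2 : ℚ) ^ (k * q + r) - 2 ^ (q - 1)) / (2 ^ q - 1))) :=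
  matrix_recursion_first_coordinate_general q a h0 hq0 hstep hqstep
end

section
/- Define polynomials in two variables c, d over the integers: P_3 = 1 + c + d, Q_3 = 1, and for n ≥ 3, P_{n+1} = P_n^2 + c·P_n·Q_n + d·Q_n^2 and Q_{n+1} = P_n^2. Then for all n ≥ 3, the total degree of P_n equals (2^n)/6 - 1/2 - (-1)^n/6, i.e., deg P_n = (2^n - 3 - (-1)^n)/6. -/
open MvPolynomial

/-- The pair `(P_{n+3}, Q_{n+3})` of polynomials in `c = X 0` and `d = X 1`:
`P_3 = 1 + c + d`, `Q_3 = 1`, `P_{n+1} = P_n² + c·P_n·Q_n + d·Q_n²`, `Q_{n+1} = P_n²`. -/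
noncomputable def PQ : ℕ → MvPolynomial (Fin 2) ℤ × MvPolynomial (Fin 2) ℤ
  | 0 => (1 + X 0 + X 1, 1)
  | (n + 1) =>
      ((PQ n).1 ^ 2 + X 0 * (PQ n).1 * (PQ n).2 + X 1 * (PQ n).2 ^ 2, (PQ n).1 ^ 2)

/-- `P_n` for `n ≥ 3`. -/
noncomputable def Ppoly (n : ℕ) : MvPolynomial (Fin 2) ℤ := (PQ (n - 3)).1

noncomputable def pq : ℕ → Polynomial ℤ × Polynomial ℤ
  | 0 => (1 + Polynomial.X + Polynomial.X ^ 2, 1)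
  | (n + 1) =>
      ((pq n).1 ^ 2 + Polynomial.X * (pq n).1 * (pq n).2
        + Polynomial.X ^ 2 * (pq n).2 ^ 2, (pq n).1 ^ 2)

def aseq : ℕ → ℕ
  | 0 => 1
  | (k + 1) => 2 * aseq k + k % 2

def bseq (k : ℕ) : ℕ := if k % 2 = 0 then aseq k - 1 else aseq k

lemma aseq_pos (k : ℕ) : 1 ≤ aseq k := by
  induction k with
  | zero => simp [aseq]
  | succ n ih => simp only [aseq]; omega

lemma aeval_PQ (k : ℕ) :
    aeval ![Polynomial.X, Polynomial.X ^ 2] (PQ k).1 = (pq k).1 ∧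
    aeval ![Polynomial.X, Polynomial.X ^ 2] (PQ k).2 = (pq k).2 := by
  induction k with
  | zero => simp [PQ, pq]
  | succ n ih => simp [PQ, pq, ih.1, ih.2]

lemma natDegree_aeval_le (P : MvPolynomial (Fin 2) ℤ) :
    (aeval ![(Polynomial.X : Polynomial ℤ), Polynomial.X ^ 2] P).natDegree
      ≤ 2 * P.totalDegree := by
  rw [aeval_def, eval₂_eq']
  apply Polynomial.natDegree_sum_le_of_forall_le
  intro d hd
  have h1 : d 0 + d 1 ≤ P.totalDegree := by
    have := le_totalDegree hd
    rwa [Finsupp.sum_fintype _ _ (fun _ => rfl), Fin.sum_univ_two] at this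
  have h2 : (algebraMap ℤ (Polynomial ℤ) (coeff d P)
      * ∏ i, ![Polynomial.X, Polynomial.X ^ 2] i ^ d i).natDegree
      ≤ (algebraMap ℤ (Polynomial ℤ) (coeff d P)).natDegree
        + (∏ i, ![Polynomial.X, Polynomial.X ^ 2] i ^ d i).natDegree :=
    Polynomial.natDegree_mul_le
  refine h2.trans ?_
  have h3 : (∏ i, ![Polynomial.X, Polynomial.X ^ 2] i ^ d i : Polynomial ℤ).natDegree
      ≤ d 0 + 2 * d 1 := by
    rw [Fin.prod_univ_two]
    refine Polynomial.natDegree_mul_le.trans ?_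
    simp [Matrix.cons_val_zero, Matrix.cons_val_one, ← pow_mul]
  have h4 : (algebraMap ℤ (Polynomial ℤ) (coeff d P)).natDegree = 0 := by
    simp [algebraMap_int_eq]
  omega

lemma dom {A B : Polynomial ℤ} (hA : A.Monic) (h : B.natDegree < A.natDegree) :
    (A + B).Monic ∧ (A + B).natDegree = A.natDegree :=
  ⟨hA.add_of_left (Polynomial.degree_lt_degree h),
    Polynomial.natDegree_add_eq_left_of_natDegree_lt h⟩

lemma key (k : ℕ) :
    (pq k).1.Monic ∧ (pq k).1.natDegree = 2 * aseq k ∧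
    (pq k).2.Monic ∧ (pq k).2.natDegree = 2 * bseq k ∧
    (PQ k).1.totalDegree ≤ aseq k ∧ (PQ k).2.totalDegree ≤ bseq k := by
  induction k with
  | zero =>
    refine ⟨?_, ?_, ?_, ?_, ?_, ?_⟩
    · show (1 + Polynomial.X + Polynomial.X ^ 2 : Polynomial ℤ).Monic
      have h1 : (1 + Polynomial.X + Polynomial.X ^ 2 : Polynomial ℤ)
          = Polynomial.X ^ 2 + (Polynomial.X + 1) := by ring
      rw [h1]
      refine (Polynomial.monic_X_pow 2).add_of_left ?_
      apply lt_of_le_of_lt (Polynomial.degree_add_le _ _)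
      rw [Polynomial.degree_X_pow, Polynomial.degree_X, Polynomial.degree_one]
      decide
    · show (1 + Polynomial.X + Polynomial.X ^ 2 : Polynomial ℤ).natDegree = 2 * aseq 0
      rw [show aseq 0 = 1 from rfl]
      compute_degree!
    · exact Polynomial.monic_one
    · show (1 : Polynomial ℤ).natDegree = 2 * bseq 0
      simp [bseq, aseq]
    · show (1 + X 0 + X 1 : MvPolynomial (Fin 2) ℤ).totalDegree ≤ aseq 0
      refine (totalDegree_add _ _).trans ?_
      rw [show aseq 0 = 1 from rfl]
      simp only [max_le_iff]
      refine ⟨(totalDegree_add _ _).trans ?_, le_of_eq (totalDegree_X _)⟩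
      simp [totalDegree_X, totalDegree_one]
    · show (1 : MvPolynomial (Fin 2) ℤ).totalDegree ≤ bseq 0
      simp [bseq, aseq, totalDegree_one]
  | succ n ih =>
    obtain ⟨hpm, hpd, hqm, hqd, hP, hQ⟩ := ih
    have ha := aseq_pos n
    set p := (pq n).1 with hp
    set q := (pq n).2 with hq
    have hA : (p ^ 2).Monic := hpm.pow 2
    have hAd : (p ^ 2).natDegree = 2 * (2 * aseq n) := by
      rw [hpm.natDegree_pow, hpd]
    have hBd : (Polynomial.X * p * q).natDegree ≤ 1 + 2 * aseq n + 2 * bseq n := by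
      refine Polynomial.natDegree_mul_le.trans ?_
      have h2 := Polynomial.natDegree_mul_le (p := (Polynomial.X : Polynomial ℤ)) (q := p)
      simp only [Polynomial.natDegree_X] at h2
      omega
    have hCm : (Polynomial.X ^ 2 * q ^ 2).Monic := (Polynomial.monic_X_pow 2).mul (hqm.pow 2)
    have hCd : (Polynomial.X ^ 2 * q ^ 2).natDegree = 2 + 2 * (2 * bseq n) := by
      rw [Polynomial.natDegree_mul (pow_ne_zero 2 Polynomial.X_ne_zero)
        (pow_ne_zero 2 hqm.ne_zero), Polynomial.natDegree_X_pow, hqm.natDegree_pow, hqd]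
    have hsucc1 : (pq (n + 1)).1
        = p ^ 2 + (Polynomial.X * p * q + Polynomial.X ^ 2 * q ^ 2) := by
      show (pq n).1 ^ 2 + _ + _ = _
      rw [← hp, ← hq]; ring
    have hsucc1' : (pq (n + 1)).1
        = Polynomial.X ^ 2 * q ^ 2 + (p ^ 2 + Polynomial.X * p * q) := by
      rw [hsucc1]; ring
    have hsucc2 : (pq (n + 1)).2 = p ^ 2 := rfl
    have haseq : aseq (n + 1) = 2 * aseq n + n % 2 := rfl
    -- total degree bounds
    have tA : ((PQ n).1 ^ 2).totalDegree ≤ 2 * aseq n := by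
      refine (totalDegree_pow _ _).trans ?_; omega
    have tB : (X 0 * (PQ n).1 * (PQ n).2).totalDegree ≤ 1 + aseq n + bseq n := by
      refine (totalDegree_mul _ _).trans ?_
      have h3 := totalDegree_mul (X 0 : MvPolynomial (Fin 2) ℤ) (PQ n).1
      rw [totalDegree_X] at h3
      omega
    have tC : (X 1 * (PQ n).2 ^ 2).totalDegree ≤ 1 + 2 * bseq n := by
      refine (totalDegree_mul _ _).trans ?_
      rw [totalDegree_X]
      have h4 := totalDegree_pow (PQ n).2 2
      omega
    have tP : (PQ (n + 1)).1.totalDegree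
        ≤ max (max (2 * aseq n) (1 + aseq n + bseq n)) (1 + 2 * bseq n) := by
      show ((PQ n).1 ^ 2 + X 0 * (PQ n).1 * (PQ n).2 + X 1 * (PQ n).2 ^ 2).totalDegree ≤ _
      refine (totalDegree_add _ _).trans
        (max_le ((totalDegree_add _ _).trans (max_le ?_ ?_)) ?_)
      · exact le_trans tA (le_sup_of_le_left le_sup_left)
      · exact le_trans tB (le_sup_of_le_left le_sup_right)
      · exact le_trans tC le_sup_right
    have tQ : (PQ (n + 1)).2.totalDegree ≤ 2 * aseq n := by
      show ((PQ n).1 ^ 2).totalDegree ≤ _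
      exact tA
    rcases Nat.mod_two_eq_zero_or_one n with hn | hn
    · -- n even : bseq n = aseq n - 1, dominant term p^2
      have hb : bseq n = aseq n - 1 := by rw [bseq, if_pos hn]
      have hb' : bseq (n + 1) = aseq (n + 1) := by
        rw [bseq, if_neg (by omega)]
      have hBC : (Polynomial.X * p * q + Polynomial.X ^ 2 * q ^ 2).natDegree
          < (p ^ 2).natDegree := by
        refine lt_of_le_of_lt (Polynomial.natDegree_add_le _ _) ?_
        simp only [max_lt_iff]
        omega
      obtain ⟨m1, d1⟩ := dom hA hBC
      rw [← hsucc1] at m1 d1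
      refine ⟨m1, ?_, hA, ?_, ?_, ?_⟩
      · rw [d1, hAd, haseq, hn]; omega
      · show (p ^ 2).natDegree = 2 * bseq (n + 1)
        rw [hAd, hb', haseq, hn]; omega
      · refine tP.trans ?_
        rw [haseq, hn]
        simp only [max_le_iff]
        omega
      · refine tQ.trans ?_
        rw [hb', haseq, hn]; omega
    · -- n odd : bseq n = aseq n, dominant term X^2 q^2
      have hb : bseq n = aseq n := by rw [bseq, if_neg (by omega)]
      have hb' : bseq (n + 1) = aseq (n + 1) - 1 := by
        rw [bseq, if_pos (by omega)]
      have hBC : (p ^ 2 + Polynomial.X * p * q).natDegree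
          < (Polynomial.X ^ 2 * q ^ 2).natDegree := by
        refine lt_of_le_of_lt (Polynomial.natDegree_add_le _ _) ?_
        simp only [max_lt_iff]
        omega
      obtain ⟨m1, d1⟩ := dom hCm hBC
      rw [← hsucc1'] at m1 d1
      refine ⟨m1, ?_, hA, ?_, ?_, ?_⟩
      · rw [d1, hCd, haseq, hn, hb]; ring
      · show (p ^ 2).natDegree = 2 * bseq (n + 1)
        rw [hAd, hb', haseq, hn]; omega
      · refine tP.trans ?_
        rw [haseq, hn]
        simp only [max_le_iff]
        omega
      · refine tQ.trans ?_
        rw [hb', haseq, hn]; omega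

lemma totalDegree_PQ (k : ℕ) : (PQ k).1.totalDegree = aseq k := by
  obtain ⟨hpm, hpd, -, -, hle, -⟩ := key k
  have h1 := natDegree_aeval_le (PQ k).1
  rw [(aeval_PQ k).1, hpd] at h1
  omega

lemma aseq_formula (k : ℕ) : (aseq k : ℤ) * 6 = 8 * 2 ^ k - 3 + (-1) ^ k := by
  induction k with
  | zero => simp [aseq]
  | succ n ih =>
    have hc : ((aseq (n + 1) : ℤ)) = 2 * (aseq n : ℤ) + ((n % 2 : ℕ) : ℤ) := by
      rw [show aseq (n + 1) = 2 * aseq n + n % 2 from rfl]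
      push_cast; ring
    rcases Nat.mod_two_eq_zero_or_one n with h | h
    · have h1 : ((-1 : ℤ)) ^ n = 1 := Even.neg_one_pow (Nat.even_iff.mpr h)
      rw [hc, h, pow_succ, pow_succ, h1]
      rw [h1] at ih
      push_cast
      linarith
    · have h1 : ((-1 : ℤ)) ^ n = -1 := Odd.neg_one_pow (Nat.odd_iff.mpr h)
      rw [hc, h, pow_succ, pow_succ, h1]
      rw [h1] at ih
      push_cast
      linarith

theorem totalDegree_Ppoly (n : ℕ) (hn : 3 ≤ n) :
    ((Ppoly n).totalDegree : ℚ) = ((2 : ℚ) ^ n - 3 - (-1) ^ n) / 6 := by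
  obtain ⟨k, rfl⟩ : ∃ k, n = k + 3 := ⟨n - 3, by omega⟩
  rw [Ppoly, Nat.add_sub_cancel, totalDegree_PQ]
  have h := aseq_formula k
  have hq : ((aseq k : ℚ)) * 6 = 8 * 2 ^ k - 3 + (-1) ^ k := by exact_mod_cast h
  rw [eq_div_iff (by norm_num : (6 : ℚ) ≠ 0)]
  rw [pow_add, pow_add]
  linarith
end

section
/- Define polynomials P_3 = 1 + c + d, Q_3 = 1, and for n ≥ 3, P_{n+1} = P_n^2 + c·P_n·Q_n + d·Q_n^2, Q_{n+1} = P_n^2. Then for all n ≥ 3: (a) the constant term of P_n is 1; (b) the coefficient of c^{deg P_n} in P_n is nonzero; (c) the coefficient of d^{deg P_n} in P_n is nonzero. -/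
/-!
At `c = d = 0` the recursion fixes `(1, 1)`, which gives the constant term.

For the extreme coefficients, restrict `P` and `Q` to the `c`-axis and to the `d`-axis. The
restrictions satisfy `f ↦ f² + X f g, g ↦ f²` and `f ↦ f² + X g², g ↦ f²` respectively, so their
leading coefficients stay positive and no cancellation occurs: their degrees `a, b` follow
`a ↦ 1 + a + b, b ↦ 2a` (using `b ≤ a ≤ b + 1`). The same recursion bounds the total degrees of
`P, Q` from above, so each axis restriction of `P` has degree exactly `deg P`, and its leading
coefficient is the coefficient of `c ^ deg P`, resp. `d ^ deg P`.
-/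

open MvPolynomial

namespace MvPolynomial

variable {σ R : Type*} [CommSemiring R] [DecidableEq σ]

noncomputable def restrictAxis (i : σ) : MvPolynomial σ R →ₐ[R] Polynomial R :=
  aeval (Pi.single i Polynomial.X)

theorem restrictAxis_X (i j : σ) :
    restrictAxis i (X j : MvPolynomial σ R) = (Pi.single i Polynomial.X : σ → Polynomial R) j :=
  aeval_X _ _

theorem coeff_restrictAxis (i : σ) (p : MvPolynomial σ R) (k : ℕ) :
    (restrictAxis i p).coeff k = coeff (Finsupp.single i k) p := by
  induction p using MvPolynomial.induction_on' with
  | monomial s r =>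
    rw [restrictAxis, aeval_monomial, coeff_monomial]
    by_cases hs : s = Finsupp.single i (s i)
    · rw [hs, Finsupp.prod_single_index (by simp)]
      simp [(Finsupp.single_injective i).eq_iff, eq_comm]
    · obtain ⟨j, hji, hsj⟩ : ∃ j, j ≠ i ∧ s j ≠ 0 := by
        by_contra! h
        exact hs (Finsupp.ext fun j => by
          rcases eq_or_ne j i with rfl | hj <;> simp [*])
      have hprod : s.prod (fun j e => (Pi.single i Polynomial.X : σ → Polynomial R) j ^ e) = 0 :=
        Finset.prod_eq_zero (Finsupp.mem_support_iff.2 hsj) (by simp [hji, zero_pow hsj])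
      rw [hprod, mul_zero, Polynomial.coeff_zero, if_neg]
      rintro rfl
      exact hs (by simp)
  | add p q hp hq => simp [hp, hq]

theorem natDegree_restrictAxis_le_totalDegree (i : σ) (p : MvPolynomial σ R) :
    (restrictAxis i p).natDegree ≤ p.totalDegree := by
  refine Polynomial.natDegree_le_iff_coeff_eq_zero.2 fun k hk => ?_
  rw [coeff_restrictAxis]
  have hk0 : k ≠ 0 := by omega
  exact coeff_eq_zero_of_totalDegree_lt (by simpa [hk0] using hk)

theorem coeff_single_totalDegree_ne_zero {i : σ} {p : MvPolynomial σ R}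
    (hne : restrictAxis i p ≠ 0)
    (hle : p.totalDegree ≤ (restrictAxis i p).natDegree) :
    coeff (Finsupp.single i p.totalDegree) p ≠ 0 := by
  rw [← coeff_restrictAxis,
    le_antisymm hle (natDegree_restrictAxis_le_totalDegree i p)]
  exact Polynomial.leadingCoeff_ne_zero.2 hne

end MvPolynomial

namespace Polynomial

variable {R : Type*} [CommRing R] [LinearOrder R]

def HasPosLeadingTerm (p : R[X]) (n : ℕ) : Prop :=
  p.natDegree = n ∧ 0 < p.leadingCoeff

namespace HasPosLeadingTerm

variable {p q : R[X]} {m n : ℕ}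

theorem ne_zero (hp : HasPosLeadingTerm p n) : p ≠ 0 :=
  leadingCoeff_ne_zero.1 hp.2.ne'

variable [IsStrictOrderedRing R]

theorem mul (hp : HasPosLeadingTerm p m) (hq : HasPosLeadingTerm q n) :
    HasPosLeadingTerm (p * q) (m + n) :=
  ⟨by rw [natDegree_mul hp.ne_zero hq.ne_zero, hp.1, hq.1],
    by rw [leadingCoeff_mul]; exact mul_pos hp.2 hq.2⟩

theorem pow (hp : HasPosLeadingTerm p n) (k : ℕ) : HasPosLeadingTerm (p ^ k) (k * n) := by
  induction k with
  | zero => simp [HasPosLeadingTerm]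
  | succ k ih => simpa [pow_succ, add_mul] using ih.mul hp

theorem add (hp : HasPosLeadingTerm p m) (hq : HasPosLeadingTerm q n) :
    HasPosLeadingTerm (p + q) (max m n) := by
  wlog hmn : m ≤ n generalizing p q m n
  · simpa [add_comm, max_comm] using this hq hp (by omega)
  rw [max_eq_right hmn]
  rcases hmn.lt_or_eq with hlt | rfl
  · have hdeg : p.natDegree < q.natDegree := by rw [hp.1, hq.1]; exact hlt
    exact ⟨by rw [natDegree_add_eq_right_of_natDegree_lt hdeg, hq.1],
      by rw [leadingCoeff_add_of_degree_lt (degree_lt_degree hdeg)]; exact hq.2⟩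
  · have hlc : 0 < p.leadingCoeff + q.leadingCoeff := add_pos hp.2 hq.2
    have hdeg : p.degree = q.degree := by
      rw [degree_eq_natDegree hp.ne_zero, degree_eq_natDegree hq.ne_zero, hp.1, hq.1]
    refine ⟨?_, by rw [leadingCoeff_add_of_degree_eq hdeg hlc.ne']; exact hlc⟩
    apply natDegree_eq_of_degree_eq_some
    rw [degree_add_eq_of_leadingCoeff_add_ne_zero hlc.ne', hdeg, max_self,
      degree_eq_natDegree hq.ne_zero, hq.1]

end HasPosLeadingTerm

variable [IsStrictOrderedRing R]

theorem hasPosLeadingTerm_one : HasPosLeadingTerm (1 : R[X]) 0 := by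
  simp [HasPosLeadingTerm]

theorem hasPosLeadingTerm_X : HasPosLeadingTerm (X : R[X]) 1 := by
  simp [HasPosLeadingTerm]

end Polynomial

/-- `(deg P_{m+3}, deg Q_{m+3})` -/
def degPQ : ℕ → ℕ × ℕ
  | 0 => (1, 0)
  | (m + 1) => (1 + (degPQ m).1 + (degPQ m).2, 2 * (degPQ m).1)

theorem degPQ_snd_le_fst_le (m : ℕ) :
    (degPQ m).2 ≤ (degPQ m).1 ∧ (degPQ m).1 ≤ (degPQ m).2 + 1 := by
  induction m with
  | zero => simp [degPQ]
  | succ m ih => simp only [degPQ]; omega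

theorem constantCoeff_PQ (m : ℕ) : constantCoeff (PQ m).1 = 1 ∧ constantCoeff (PQ m).2 = 1 := by
  induction m with
  | zero => simp [PQ]
  | succ m ih => simp [PQ, ih.1, ih.2]

theorem totalDegree_PQ_le (m : ℕ) :
    (PQ m).1.totalDegree ≤ (degPQ m).1 ∧ (PQ m).2.totalDegree ≤ (degPQ m).2 := by
  induction m with
  | zero =>
    refine ⟨?_, by simp [PQ]⟩
    refine (totalDegree_add _ _).trans (max_le ((totalDegree_add _ _).trans (max_le ?_ ?_)) ?_) <;>
      simp [degPQ]
  | succ m ih =>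
    obtain ⟨hP, hQ⟩ := ih
    obtain ⟨hba, hab⟩ := degPQ_snd_le_fst_le m
    simp only [PQ, degPQ]
    set P := (PQ m).1
    set Q := (PQ m).2
    have hP2 : (P ^ 2).totalDegree ≤ 2 * (degPQ m).1 := (totalDegree_pow _ _).trans (by omega)
    have hXPQ : (X 0 * P * Q).totalDegree ≤ 1 + (degPQ m).1 + (degPQ m).2 :=
      (totalDegree_mul _ _).trans
        (add_le_add ((totalDegree_mul _ _).trans (by rw [totalDegree_X]; omega)) hQ)
    have hXQ2 : (X 1 * Q ^ 2).totalDegree ≤ 1 + 2 * (degPQ m).2 :=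
      (totalDegree_mul _ _).trans (by rw [totalDegree_X]; have := totalDegree_pow Q 2; omega)
    refine ⟨(totalDegree_add _ _).trans (max_le ((totalDegree_add _ _).trans (max_le ?_ ?_)) ?_),
      hP2⟩ <;> omega

open Polynomial in
theorem hasPosLeadingTerm_restrictAxis_PQ (i : Fin 2) (m : ℕ) :
    HasPosLeadingTerm (restrictAxis i (PQ m).1) (degPQ m).1 ∧
      HasPosLeadingTerm (restrictAxis i (PQ m).2) (degPQ m).2 := by
  induction m with
  | zero =>
    refine ⟨?_, by simpa [PQ, degPQ] using hasPosLeadingTerm_one⟩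
    fin_cases i <;> simpa [PQ, degPQ, restrictAxis_X, add_comm] using
      hasPosLeadingTerm_one.add hasPosLeadingTerm_X
  | succ m ih =>
    obtain ⟨hf, hg⟩ := ih
    obtain ⟨hba, hab⟩ := degPQ_snd_le_fst_le m
    refine ⟨?_, by simpa [PQ, degPQ, mul_comm] using hf.pow 2⟩
    fin_cases i
    · have h := (hf.pow 2).add ((hasPosLeadingTerm_X.mul hf).mul hg)
      rw [max_eq_right (by omega)] at h
      simpa [PQ, degPQ, restrictAxis_X] using h
    · have h := (hf.pow 2).add (hasPosLeadingTerm_X.mul (hg.pow 2))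
      rw [show max (2 * (degPQ m).1) (1 + 2 * (degPQ m).2) = 1 + (degPQ m).1 + (degPQ m).2 by
        omega] at h
      simpa [PQ, degPQ, restrictAxis_X] using h

theorem Ppoly_constant_term_and_extreme_coeffs_general (n : ℕ) :
    coeff 0 (Ppoly n) = 1 ∧
    coeff (Finsupp.single 0 (Ppoly n).totalDegree) (Ppoly n) ≠ 0 ∧
    coeff (Finsupp.single 1 (Ppoly n).totalDegree) (Ppoly n) ≠ 0 := by
  have hextreme (i : Fin 2) :
      coeff (Finsupp.single i (PQ (n - 3)).1.totalDegree) (PQ (n - 3)).1 ≠ 0 := by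
    obtain ⟨hP, -⟩ := hasPosLeadingTerm_restrictAxis_PQ i (n - 3)
    refine coeff_single_totalDegree_ne_zero hP.ne_zero ?_
    rw [hP.1]
    exact (totalDegree_PQ_le (n - 3)).1
  exact ⟨(constantCoeff_PQ (n - 3)).1, hextreme 0, hextreme 1⟩

theorem Ppoly_constant_term_and_extreme_coeffs (n : ℕ) (hn : 3 ≤ n) :
    coeff 0 (Ppoly n) = 1 ∧
    coeff (Finsupp.single 0 (Ppoly n).totalDegree) (Ppoly n) ≠ 0 ∧
    coeff (Finsupp.single 1 (Ppoly n).totalDegree) (Ppoly n) ≠ 0 :=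
  Ppoly_constant_term_and_extreme_coeffs_general n
end
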